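/- Let β > 0 and let n, p be integers with 2 ≤ p ≤ n−1. For every A ∈ Skew(p) and B ∈ ℝ^{(n−p)×p} with (A,B) ≠ (0,0) satisfying the loop equation exp_m([[2βA, −Bᵀ],[B, 0]]) · I_{n×p} · exp_m((1−2β)A) = I_{n×p}, there exist A' ∈ Skew(p) and B' ∈ ℝ^{p×p} with (A',B') ≠ (0,0) satisfying the corresponding loop equation on St(2p,p), namely exp_m([[2βA', −B'ᵀ],[B', 0]]) · I_{2p×p} · exp_m((1−2β)A') = I_{2p×p}, and with β‖A'‖_F² + ‖B'‖_F² = β‖A‖_F² + ‖B‖_F². Consequently, the length of a shortest nontrivial geodesic loop on St_β(n,p) is at least the length of a shortest nontrivial geodesic loop on St_β(2p,p). -/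

import Mathlib

/-!
The loop condition sees `B` only through its Gram matrix `Bᵀ B`. Indeed `diag(1, B)` intertwines
the generator `[[a, -Bᵀ], [B, 0]]` with `[[a, -Bᵀ B], [1, 0]]`, so
`exp [[a, -Bᵀ], [B, 0]] · I_{n×p} = [X; B Z]` with `X`, `Z` depending on `a` and `Bᵀ B` alone,
and `B Z = 0` iff `Bᵀ B Z = 0`. Replacing `B` by a `p × p` square root `B'` of `Bᵀ B` therefore
yields a loop on `St(2p, p)` with the same `β`-length, since `‖B‖_F² = tr (Bᵀ B)`. For the
infima it remains to see that `St(n, p)` carries a nontrivial loop at all: a full turn in the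
plane of two basis vectors, one from each block.
-/

open Matrix

noncomputable def mexp {N : Type*} [Fintype N] [DecidableEq N] (M : Matrix N N ℝ) :
    Matrix N N ℝ :=
  NormedSpace.exp M

noncomputable def frobSq {m n : Type*} [Fintype m] [Fintype n] (A : Matrix m n ℝ) : ℝ :=
  ∑ i, ∑ j, (A i j) ^ 2

open NormedSpace
open scoped Real

attribute [local instance] Matrix.linftyOpNormedAddCommGroup Matrix.linftyOpNormedSpace
  Matrix.linftyOpNormedRing Matrix.linftyOpNormedAlgebra

namespace Matrix

variable {𝕂 : Type*} [RCLike 𝕂] {k l m n : Type*} [Fintype k] [Fintype l] [Fintype m]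
  [Fintype n]

theorem exists_conjTranspose_mul_self_eq [DecidableEq k] (B : Matrix l k 𝕂) :
    ∃ C : Matrix k k 𝕂, Cᴴ * C = Bᴴ * B := by
  open scoped MatrixOrder ComplexOrder in
  obtain ⟨C, hC⟩ := CStarAlgebra.nonneg_iff_eq_star_mul_self.mp
    (posSemidef_conjTranspose_mul_self B).nonneg
  exact ⟨C, hC.symm⟩

variable [DecidableEq k] [DecidableEq l] [DecidableEq m] [DecidableEq n]

theorem exp_mul_eq_mul_exp_of_mul_eq {M : Matrix m m 𝕂} {N : Matrix n n 𝕂}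
    {T : Matrix m n 𝕂} (h : M * T = T * N) : exp M * T = T * exp N := by
  have hpow (j : ℕ) : M ^ j * T = T * N ^ j := by
    induction j with
    | zero => simp
    | succ j ih =>
      rw [pow_succ, Matrix.mul_assoc, h, ← Matrix.mul_assoc, ih, Matrix.mul_assoc, ← pow_succ]
  have hM := (exp_series_hasSum_exp' (𝕂 := 𝕂) M).map (addMonoidHomMulRight T)
    (continuous_id.matrix_mul continuous_const)
  have hN := (exp_series_hasSum_exp' (𝕂 := 𝕂) N).map (addMonoidHomMulLeft T)
    (continuous_const.matrix_mul continuous_id)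
  refine hM.unique (hN.congr_fun fun j => ?_)
  simp [addMonoidHomMulLeft, addMonoidHomMulRight, hpow]

theorem exp_mul_mul_eq_one {U : Matrix n m 𝕂} {V : Matrix m n 𝕂} (hUV : U * V = 1)
    {X : Matrix n n 𝕂} (hX : exp X = 1) : exp (V * X * U) = 1 := by
  -- `V * U` and `1 - V * U` are complementary projections, fixed by the exponential: the first
  -- because `exp X = 1`, the second because `V * X * U` vanishes on its range.
  have hV : exp (V * X * U) * V = V := by
    rw [exp_mul_eq_mul_exp_of_mul_eq (N := X), hX, Matrix.mul_one]
    rw [Matrix.mul_assoc, hUV, Matrix.mul_one]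
  have hW : exp (V * X * U) * (1 - V * U) = 1 - V * U := by
    rw [exp_mul_eq_mul_exp_of_mul_eq (N := 0), NormedSpace.exp_zero, Matrix.mul_one]
    simp only [Matrix.mul_sub, Matrix.mul_one, Matrix.mul_zero, Matrix.mul_assoc]
    rw [← Matrix.mul_assoc U V U, hUV, Matrix.one_mul, sub_self]
  calc exp (V * X * U) = exp (V * X * U) * (V * U) + exp (V * X * U) * (1 - V * U) := by
        rw [← Matrix.mul_add, add_sub_cancel, Matrix.mul_one]
    _ = 1 := by rw [hW, ← Matrix.mul_assoc, hV, add_sub_cancel]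

theorem exp_fromBlocks_mul_fromRows (a : Matrix k k 𝕂) (B : Matrix l k 𝕂) :
    exp (fromBlocks a (-Bᵀ) B 0) * fromRows (1 : Matrix k k 𝕂) (0 : Matrix l k 𝕂) =
      fromBlocks (1 : Matrix k k 𝕂) 0 0 B *
        (exp (fromBlocks a (-(Bᵀ * B)) (1 : Matrix k k 𝕂) 0) *
          fromRows (1 : Matrix k k 𝕂) (0 : Matrix k k 𝕂)) := by
  have hT : fromBlocks a (-Bᵀ) B 0 * fromBlocks (1 : Matrix k k 𝕂) 0 0 B =
      fromBlocks (1 : Matrix k k 𝕂) 0 0 B *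
        fromBlocks a (-(Bᵀ * B)) (1 : Matrix k k 𝕂) 0 := by
    simp [fromBlocks_multiply]
  have hF : fromRows (1 : Matrix k k 𝕂) (0 : Matrix l k 𝕂) =
      fromBlocks (1 : Matrix k k 𝕂) 0 0 B *
        fromRows (1 : Matrix k k 𝕂) (0 : Matrix k k 𝕂) := by
    simp [fromBlocks_mul_fromRows]
  rw [hF, ← Matrix.mul_assoc, exp_mul_eq_mul_exp_of_mul_eq hT, Matrix.mul_assoc]

theorem exp_two_pi_rotation : exp ((2 * π) • !![(0 : ℝ), -1; 1, 0]) = 1 := by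
  set J : Matrix (Fin 2) (Fin 2) ℝ := !![0, -1; 1, 0]
  have hJ : J * J = -1 := by
    ext i j; fin_cases i <;> fin_cases j <;> simp [J]
  let Φ : ℂ →ₐ[ℝ] Matrix (Fin 2) (Fin 2) ℝ := Complex.liftAux J hJ
  have hΦ : Φ ((2 * π : ℝ) • Complex.I) = (2 * π) • J := by
    simp [Φ]
  have h := map_exp Φ Φ.toLinearMap.continuous_of_finiteDimensional
    ((2 * π : ℝ) • Complex.I)
  rw [hΦ, Complex.real_smul, ← Complex.exp_eq_exp_ℂ] at h
  push_cast at h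
  rw [Complex.exp_two_pi_mul_I, map_one] at h
  exact h.symm

theorem exp_fromBlocks_single_two_pi (i : k) (j : l) :
    exp (fromBlocks 0 (-(single j i (2 * π))ᵀ) (single j i (2 * π)) 0) = 1 := by
  let V : Matrix (k ⊕ l) (Fin 2) ℝ := fromRows (single i 0 1) (single j 1 1)
  have hV : Vᵀ * V = 1 := by
    simp only [V, transpose_fromRows, fromCols_mul_fromRows, transpose_single,
      single_mul_single_same]
    ext a b; fin_cases a <;> fin_cases b <;> simp
  have hM : fromBlocks 0 (-(single j i (2 * π))ᵀ) (single j i (2 * π)) 0 =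
      V * ((2 * π) • !![(0 : ℝ), -1; 1, 0]) * Vᵀ := by
    have hneg : -(single j i (2 * π))ᵀ = single i j (-(2 * π)) :=
      ext fun _ _ => by simp [single, neg_ite, and_comm]
    rw [hneg]
    simp [V, transpose_fromRows, transpose_single]
  rw [hM]
  exact exp_mul_mul_eq_one hV exp_two_pi_rotation

end Matrix

section Stiefel

variable {k l : Type*} [Fintype k] [DecidableEq k] [Fintype l] [DecidableEq l]

def IsGeodesicLoop (β : ℝ) (A : Matrix k k ℝ) (B : Matrix l k ℝ) : Prop :=
  mexp (fromBlocks ((2 * β) • A) (-Bᵀ) B 0) *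
      fromRows (1 : Matrix k k ℝ) (0 : Matrix l k ℝ) * mexp ((1 - 2 * β) • A) =
    fromRows 1 0

theorem IsGeodesicLoop.of_transpose_mul_self_eq {β : ℝ} {A : Matrix k k ℝ} {B : Matrix l k ℝ}
    {m : Type*} [Fintype m] [DecidableEq m] {B' : Matrix m k ℝ} (hB : Bᵀ * B = B'ᵀ * B')
    (h : IsGeodesicLoop β A B) : IsGeodesicLoop β A B' := by
  -- With `[X; Z]` the first block column of the `(k ⊕ k)`-exponential, the loop condition says
  -- `X * E = 1` and `B * Z = 0`, and the latter is equivalent to `Bᵀ * B * Z = 0`.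
  unfold IsGeodesicLoop mexp at *
  rw [exp_fromBlocks_mul_fromRows] at h ⊢
  rw [← hB]
  set Y := exp (fromBlocks ((2 * β) • A) (-(Bᵀ * B)) (1 : Matrix k k ℝ) 0) *
    fromRows (1 : Matrix k k ℝ) (0 : Matrix k k ℝ)
  set E := exp ((1 - 2 * β) • A)
  rw [← fromRows_toRows Y] at h ⊢
  simp only [fromBlocks_mul_fromRows, fromRows_mul, Matrix.one_mul, Matrix.zero_mul,
    add_zero, zero_add] at h ⊢
  obtain ⟨hX, hZ⟩ := fromRows_inj h
  obtain ⟨F, hEF⟩ := (Matrix.isUnit_exp ((1 - 2 * β) • A)).exists_right_inv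
  have hBZ : B * Y.toRows₂ = 0 :=
    mul_left_injective_of_inv E F hEF (by simpa only [Matrix.zero_mul] using hZ)
  have hB'Z : B' * Y.toRows₂ = 0 := by
    rw [← conjTranspose_mul_self_mul_eq_zero, conjTranspose_eq_transpose_of_trivial, ← hB,
      ← conjTranspose_eq_transpose_of_trivial, conjTranspose_mul_self_mul_eq_zero]
    exact hBZ
  rw [hX, hB'Z, Matrix.zero_mul]

theorem frobSq_eq_trace {m n : Type*} [Fintype m] [Fintype n] (A : Matrix m n ℝ) :
    frobSq A = trace (Aᵀ * A) := by
  simp only [frobSq, trace, diag_apply, mul_apply, transpose_apply, sq]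
  exact Finset.sum_comm

theorem exists_square_isGeodesicLoop {β : ℝ} {A : Matrix k k ℝ} {B : Matrix l k ℝ}
    (hAB : ¬(A = 0 ∧ B = 0)) (h : IsGeodesicLoop β A B) :
    ∃ B' : Matrix k k ℝ,
      ¬(A = 0 ∧ B' = 0) ∧ IsGeodesicLoop β A B' ∧ frobSq B' = frobSq B := by
  obtain ⟨B', hB'⟩ : ∃ B' : Matrix k k ℝ, B'ᵀ * B' = Bᵀ * B := by
    simpa only [conjTranspose_eq_transpose_of_trivial] using exists_conjTranspose_mul_self_eq B
  refine ⟨B', ?_, h.of_transpose_mul_self_eq hB'.symm,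
    by rw [frobSq_eq_trace, frobSq_eq_trace, hB']⟩
  rintro ⟨rfl, rfl⟩
  refine hAB ⟨rfl, ?_⟩
  rw [← conjTranspose_mul_self_eq_zero, conjTranspose_eq_transpose_of_trivial, ← hB',
    Matrix.mul_zero]

theorem isGeodesicLoop_single_two_pi (β : ℝ) (i : k) (j : l) :
    IsGeodesicLoop β 0 (single j i (2 * π)) := by
  simp only [IsGeodesicLoop, mexp, smul_zero, exp_zero, Matrix.mul_one]
  rw [exp_fromBlocks_single_two_pi, Matrix.one_mul]

end Stiefel

theorem loop_reduction_to_square_case_general (n p : ℕ) (hp : 2 ≤ p) (hn : p + 1 ≤ n)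
    (β : ℝ) :
    (∀ (A : Matrix (Fin p) (Fin p) ℝ) (B : Matrix (Fin (n - p)) (Fin p) ℝ),
        Aᵀ = -A → ¬(A = 0 ∧ B = 0) →
        mexp (Matrix.fromBlocks ((2 * β) • A) (-Bᵀ) B 0) *
            Matrix.fromRows (1 : Matrix (Fin p) (Fin p) ℝ)
              (0 : Matrix (Fin (n - p)) (Fin p) ℝ) *
            mexp ((1 - 2 * β) • A) = Matrix.fromRows 1 0 →
        ∃ (A' : Matrix (Fin p) (Fin p) ℝ) (B' : Matrix (Fin p) (Fin p) ℝ),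
          A'ᵀ = -A' ∧ ¬(A' = 0 ∧ B' = 0) ∧
          mexp (Matrix.fromBlocks ((2 * β) • A') (-B'ᵀ) B' 0) *
              Matrix.fromRows (1 : Matrix (Fin p) (Fin p) ℝ)
                (0 : Matrix (Fin p) (Fin p) ℝ) *
              mexp ((1 - 2 * β) • A') = Matrix.fromRows 1 0 ∧
          β * frobSq A' + frobSq B' = β * frobSq A + frobSq B) ∧
    sInf {L : ℝ | ∃ (A : Matrix (Fin p) (Fin p) ℝ) (B : Matrix (Fin (n - p)) (Fin p) ℝ),
        Aᵀ = -A ∧ ¬(A = 0 ∧ B = 0) ∧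
        mexp (Matrix.fromBlocks ((2 * β) • A) (-Bᵀ) B 0) *
            Matrix.fromRows (1 : Matrix (Fin p) (Fin p) ℝ)
              (0 : Matrix (Fin (n - p)) (Fin p) ℝ) *
            mexp ((1 - 2 * β) • A) = Matrix.fromRows 1 0 ∧
        L = Real.sqrt (β * frobSq A + frobSq B)} ≥
      sInf {L : ℝ | ∃ (A' : Matrix (Fin p) (Fin p) ℝ) (B' : Matrix (Fin p) (Fin p) ℝ),
        A'ᵀ = -A' ∧ ¬(A' = 0 ∧ B' = 0) ∧
        mexp (Matrix.fromBlocks ((2 * β) • A') (-B'ᵀ) B' 0) *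
            Matrix.fromRows (1 : Matrix (Fin p) (Fin p) ℝ)
              (0 : Matrix (Fin p) (Fin p) ℝ) *
            mexp ((1 - 2 * β) • A') = Matrix.fromRows 1 0 ∧
        L = Real.sqrt (β * frobSq A' + frobSq B')} := by
  refine ⟨fun A B hA hAB h => ?_, csInf_le_csInf ?_ ?_ ?_⟩
  · obtain ⟨B', hAB', h', hfrob⟩ := exists_square_isGeodesicLoop hAB h
    exact ⟨A, B', hA, hAB', h', by rw [hfrob]⟩
  · exact ⟨0, by rintro _ ⟨_, _, -, -, -, rfl⟩; exact Real.sqrt_nonneg _⟩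
  · let i : Fin p := ⟨0, by omega⟩
    let j : Fin (n - p) := ⟨0, by omega⟩
    refine ⟨_, 0, single j i (2 * π), by simp, ?_, isGeodesicLoop_single_two_pi β i j,
      rfl⟩
    rintro ⟨-, h⟩
    simpa [Real.pi_ne_zero] using congrFun (congrFun h j) i
  · rintro _ ⟨A, B, hA, hAB, h, rfl⟩
    obtain ⟨B', hAB', h', hfrob⟩ := exists_square_isGeodesicLoop hAB h
    exact ⟨A, B', hA, hAB', h', by rw [hfrob]⟩

/-- Every nontrivial geodesic loop on `St_β(n,p)` gives rise to a nontrivial geodesic loop on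
`St_β(2p,p)` of the same β-length. Consequently, the length of a shortest nontrivial geodesic
loop on `St_β(n,p)` is at least the length of a shortest nontrivial geodesic loop on
`St_β(2p,p)`. -/
theorem loop_reduction_to_square_case (n p : ℕ) (hp : 2 ≤ p) (hn : p + 1 ≤ n)
    (β : ℝ) (hβ : 0 < β) :
    (∀ (A : Matrix (Fin p) (Fin p) ℝ) (B : Matrix (Fin (n - p)) (Fin p) ℝ),
        Aᵀ = -A → ¬(A = 0 ∧ B = 0) →
        mexp (Matrix.fromBlocks ((2 * β) • A) (-Bᵀ) B 0) *
            Matrix.fromRows (1 : Matrix (Fin p) (Fin p) ℝ)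
              (0 : Matrix (Fin (n - p)) (Fin p) ℝ) *
            mexp ((1 - 2 * β) • A) = Matrix.fromRows 1 0 →
        ∃ (A' : Matrix (Fin p) (Fin p) ℝ) (B' : Matrix (Fin p) (Fin p) ℝ),
          A'ᵀ = -A' ∧ ¬(A' = 0 ∧ B' = 0) ∧
          mexp (Matrix.fromBlocks ((2 * β) • A') (-B'ᵀ) B' 0) *
              Matrix.fromRows (1 : Matrix (Fin p) (Fin p) ℝ)
                (0 : Matrix (Fin p) (Fin p) ℝ) *
              mexp ((1 - 2 * β) • A') = Matrix.fromRows 1 0 ∧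
          β * frobSq A' + frobSq B' = β * frobSq A + frobSq B) ∧
    sInf {L : ℝ | ∃ (A : Matrix (Fin p) (Fin p) ℝ) (B : Matrix (Fin (n - p)) (Fin p) ℝ),
        Aᵀ = -A ∧ ¬(A = 0 ∧ B = 0) ∧
        mexp (Matrix.fromBlocks ((2 * β) • A) (-Bᵀ) B 0) *
            Matrix.fromRows (1 : Matrix (Fin p) (Fin p) ℝ)
              (0 : Matrix (Fin (n - p)) (Fin p) ℝ) *
            mexp ((1 - 2 * β) • A) = Matrix.fromRows 1 0 ∧
        L = Real.sqrt (β * frobSq A + frobSq B)} ≥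
      sInf {L : ℝ | ∃ (A' : Matrix (Fin p) (Fin p) ℝ) (B' : Matrix (Fin p) (Fin p) ℝ),
        A'ᵀ = -A' ∧ ¬(A' = 0 ∧ B' = 0) ∧
        mexp (Matrix.fromBlocks ((2 * β) • A') (-B'ᵀ) B' 0) *
            Matrix.fromRows (1 : Matrix (Fin p) (Fin p) ℝ)
              (0 : Matrix (Fin p) (Fin p) ℝ) *
            mexp ((1 - 2 * β) • A') = Matrix.fromRows 1 0 ∧
        L = Real.sqrt (β * frobSq A' + frobSq B')} :=
  loop_reduction_to_square_case_general n p hp hn β
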